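/- arXiv:1807.09668 — 4 statements merged into one kernel-verified Lean document; each statement's English description precedes it below -/
import Mathlib

section
/- Let r ∈ ℕ and 0 < 1/n ≪ ρ ≪ d, 1/r with 0 < d < 1. If G is a (ρ,d)-dense graph on n vertices, then G contains at least (d/2)^C(r+1,2) · nʳ / r! copies of K_r, each of which is (dʳn/2ʳ)-extendable, i.e. the r vertices of the clique have at least dʳn/2ʳ common neighbours in G. -/
/-!
Grow cliques one vertex at a time, keeping the invariant that a `k`-clique `K` has at least
`(d/2)ᵏ n` common neighbours. Inside `U = N(K)`, local density gives `e(G[U]) ≳ d |U|² / 2`, and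
the degree of `v` in `G[U]` is `|N(K ∪ {v})|`; so if fewer than `t = (d/2)ᵏ⁺¹ n` vertices `v ∈ U`
had `|N(K ∪ {v})| ≥ t`, the edge count of `G[U]` would be too small once `ρ ≪ (d/2)²ʳ` and `n` is
large. Hence every good `k`-clique has at least `t` good one-vertex extensions, and since a
`(k+1)`-clique arises in at most `k+1` ways, the number of good cliques grows by a factor
`t / (k+1)` per step, giving `(d/2)^C(r+1,2) nʳ / r!` good `r`-cliques.
-/

open Finset

/-- The number of edges of `G` with both endpoints in `X`, i.e. `e(G[X])`. -/
noncomputable def inducedEdgeCount {V : Type*} [Fintype V] (G : SimpleGraph V)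
    (X : Finset V) : ℕ :=
  letI : DecidableEq V := Classical.decEq V
  letI : DecidableRel G.Adj := Classical.decRel _
  letI : DecidablePred (fun e : Sym2 V => ∀ v ∈ e, v ∈ X) := Classical.decPred _
  (G.edgeFinset.filter (fun e => ∀ v ∈ e, v ∈ X)).card

/-- A graph `G` on `n` vertices is `(ρ,d)`-dense if every vertex subset `X` satisfies
`e(G[X]) ≥ d·C(|X|,2) − ρn²`. -/
def LocallyDense {V : Type*} [Fintype V] (G : SimpleGraph V) (ρ d : ℝ) : Prop :=
  ∀ X : Finset V,
    d * (X.card.choose 2 : ℝ) - ρ * (Fintype.card V : ℝ) ^ 2 ≤ (inducedEdgeCount G X : ℝ)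


/-- The number of common neighbours in `G` of the vertices of `K`. -/
noncomputable def commonNbhdCard {V : Type*} [Fintype V] (G : SimpleGraph V)
    (K : Finset V) : ℕ :=
  letI : DecidableRel G.Adj := Classical.decRel _
  letI : DecidablePred (fun v : V => ∀ x ∈ K, G.Adj x v) := Classical.decPred _
  (Finset.univ.filter (fun v : V => ∀ x ∈ K, G.Adj x v)).card

namespace Finset

lemma sum_le_card_filter_nsmul_add {ι M : Type*} [AddCommMonoid M] [LinearOrder M]
    [AddLeftMono M] (s : Finset ι) (f : ι → M) {a b : M} (h : ∀ i ∈ s, f i ≤ a) :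
    ∑ i ∈ s, f i ≤ #{i ∈ s | b ≤ f i} • a + #{i ∈ s | ¬b ≤ f i} • b := by
  rw [← sum_filter_add_sum_filter_not s (b ≤ f ·)]
  gcongr
  · exact sum_le_card_nsmul _ _ _ fun i hi => h i (mem_filter.1 hi).1
  · exact sum_le_card_nsmul _ _ _ fun i hi => (not_le.1 (mem_filter.1 hi).2).le

end Finset

namespace SimpleGraph

variable {V : Type*} [Fintype V] [DecidableEq V] (G : SimpleGraph V) [DecidableRel G.Adj]

lemma inducedEdgeCount_eq_card_edgeFinset_induce (X : Finset V) :
    inducedEdgeCount G X = #(G.induce (X : Set V)).edgeFinset := by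
  have := congrArg card (map_edgeFinset_induce (G := G) (s := (X : Set V)))
  rw [card_map] at this
  convert this.symm using 3
  rw [inducedEdgeCount]
  congr 1
  ext e
  simp [mem_sym2_iff]

lemma sum_card_neighborFinset_inter (X : Finset V) :
    ∑ v ∈ X, #(G.neighborFinset v ∩ X) = 2 * inducedEdgeCount G X := by
  rw [inducedEdgeCount_eq_card_edgeFinset_induce, ← sum_degrees_eq_twice_card_edges,
    ← sum_coe_sort X]
  refine sum_congr rfl fun v _ => ?_
  have := congrArg card (map_neighborFinset_induce (G := G) (s := (X : Set V)) v)
  rw [card_map, Finset.toFinset_coe] at this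
  rw [← card_neighborFinset_eq_degree]
  convert this.symm using 3

def commonNbhd (K : Finset V) : Finset V := {v | ∀ x ∈ K, G.Adj x v}

variable {G} in
@[simp]
lemma mem_commonNbhd {K : Finset V} {v : V} : v ∈ G.commonNbhd K ↔ ∀ x ∈ K, G.Adj x v := by
  simp [commonNbhd]

lemma card_commonNbhd (K : Finset V) : #(G.commonNbhd K) = commonNbhdCard G K := by
  unfold commonNbhdCard commonNbhd
  congr!

@[simp]
lemma commonNbhd_empty : G.commonNbhd ∅ = univ := by
  ext; simp

lemma commonNbhd_insert (v : V) (K : Finset V) :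
    G.commonNbhd (insert v K) = G.neighborFinset v ∩ G.commonNbhd K := by
  ext; simp [adj_comm]

variable {G} in
lemma notMem_of_mem_commonNbhd {K : Finset V} {v : V} (hv : v ∈ G.commonNbhd K) : v ∉ K :=
  fun hvK => G.irrefl (mem_commonNbhd.1 hv v hvK)

noncomputable def goodExtensions (t : ℝ) (K : Finset V) : Finset V :=
  {v ∈ G.commonNbhd K | t ≤ #(G.commonNbhd (insert v K))}

noncomputable def goodCliques (a : ℝ) (k : ℕ) : Finset (Finset V) :=
  {K | #K = k ∧ G.IsClique (K : Set V) ∧ a ^ k * Fintype.card V ≤ #(G.commonNbhd K)}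

variable {G}

lemma mem_goodCliques {a : ℝ} {k : ℕ} {K : Finset V} :
    K ∈ G.goodCliques a k ↔
      #K = k ∧ G.IsClique (K : Set V) ∧ a ^ k * Fintype.card V ≤ #(G.commonNbhd K) := by
  simp [goodCliques]

lemma insert_mem_goodCliques {a : ℝ} {k : ℕ} {K : Finset V} {v : V}
    (hK : K ∈ G.goodCliques a k) (hv : v ∈ G.goodExtensions (a ^ (k + 1) * Fintype.card V) K) :
    insert v K ∈ G.goodCliques a (k + 1) := by
  obtain ⟨hcard, hclique, -⟩ := mem_goodCliques.1 hK
  obtain ⟨hvK, hgood⟩ := mem_filter.1 hv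
  refine mem_goodCliques.2 ⟨?_, ?_, hgood⟩
  · rw [card_insert_of_notMem (notMem_of_mem_commonNbhd hvK), hcard]
  · rw [coe_insert]
    exact hclique.insert fun b hb _ => (mem_commonNbhd.1 hvK b hb).symm

lemma card_goodCliques_mul_le (a : ℝ) (k : ℕ)
    (h : ∀ K ∈ G.goodCliques a k,
      a ^ (k + 1) * Fintype.card V ≤ #(G.goodExtensions (a ^ (k + 1) * Fintype.card V) K)) :
    #(G.goodCliques a k) * (a ^ (k + 1) * Fintype.card V) ≤
      #(G.goodCliques a (k + 1)) * (k + 1 : ℝ) := by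
  have := card_nsmul_le_card_nsmul (R := ℝ) (fun K L : Finset V => K ⊆ L)
    (s := G.goodCliques a k) (t := G.goodCliques a (k + 1))
    (m := a ^ (k + 1) * Fintype.card V) (n := (k + 1 : ℝ)) ?_ ?_
  · simpa only [nsmul_eq_mul] using this
  · intro K hK
    refine (h K hK).trans ?_
    refine Nat.cast_le.2 (card_le_card_of_injOn (insert · K) (fun v hv => ?_) ?_)
    · exact (mem_bipartiteAbove _).2 ⟨insert_mem_goodCliques hK hv, subset_insert v K⟩
    · intro v hv w hw hvw
      have hvK := notMem_of_mem_commonNbhd (mem_filter.1 hv).1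
      have hv' : v ∈ insert w K := by
        rw [← show insert v K = insert w K from hvw]
        exact mem_insert_self v K
      exact (mem_insert.1 hv').resolve_right hvK
  · intro L hL
    have hsub : (G.goodCliques a k).bipartiteBelow (· ⊆ ·) L ⊆ L.powersetCard k := by
      intro K hK
      obtain ⟨hK, hKL⟩ := mem_bipartiteBelow _ |>.1 hK
      exact mem_powersetCard.2 ⟨hKL, (mem_goodCliques.1 hK).1⟩
    have hcard := card_le_card hsub
    rw [card_powersetCard, (mem_goodCliques.1 hL).1, Nat.choose_succ_self_right] at hcard
    exact_mod_cast hcard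

end SimpleGraph

section LocallyDense

open SimpleGraph

variable {V : Type*} [Fintype V] [DecidableEq V] {G : SimpleGraph V} [DecidableRel G.Adj]
  {ρ d : ℝ}

lemma LocallyDense.le_sum_card_neighborFinset_inter (hG : LocallyDense G ρ d) (X : Finset V) :
    d * #X * (#X - 1) - 2 * ρ * Fintype.card V ^ 2 ≤
      ∑ v ∈ X, (#(G.neighborFinset v ∩ X) : ℝ) := by
  have h := hG X
  rw [Nat.cast_choose_two] at h
  have hsum := congrArg (Nat.cast : ℕ → ℝ) (G.sum_card_neighborFinset_inter X)
  push_cast at hsum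
  linarith

lemma LocallyDense.le_card_goodExtensions (hG : LocallyDense G ρ d) (hd : d < 2) {t : ℝ}
    {K : Finset V} (hK : 2 * t ≤ d * #(G.commonNbhd K))
    (ht : d * Fintype.card V + 2 * ρ * Fintype.card V ^ 2 ≤ t ^ 2) :
    t ≤ #(G.goodExtensions t K) := by
  rcases le_or_gt t 0 with ht₀ | ht₀
  · exact ht₀.trans (Nat.cast_nonneg _)
  set U := G.commonNbhd K
  have hlow := hG.le_sum_card_neighborFinset_inter U
  rw [sum_congr rfl fun v _ => by rw [← commonNbhd_insert]] at hlow
  have hupp := sum_le_card_filter_nsmul_add U (fun v => (#(G.commonNbhd (insert v K)) : ℝ))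
    (a := #U) (b := t) fun v _ => by
      rw [commonNbhd_insert]
      exact Nat.cast_le.2 (card_le_card inter_subset_right)
  have hcard := card_filter_add_card_filter_not (s := U)
    (fun v => t ≤ (#(G.commonNbhd (insert v K)) : ℝ))
  rw [← goodExtensions] at hupp hcard
  have hun : (#U : ℝ) ≤ Fintype.card V := Nat.cast_le.2 (card_le_univ U)
  have hbad : (#{v ∈ U | ¬t ≤ (#(G.commonNbhd (insert v K)) : ℝ)} : ℝ) =
      #U - #(G.goodExtensions t K) := by
    rw [eq_sub_iff_add_eq']
    exact_mod_cast hcard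
  rw [nsmul_eq_mul, nsmul_eq_mul, hbad] at hupp
  set n : ℝ := (Fintype.card V : ℝ)
  set u : ℝ := (#U : ℝ)
  set m : ℝ := (#(G.goodExtensions t K) : ℝ)
  have hu₀ : 0 < u := by nlinarith [(Nat.cast_nonneg _ : (0 : ℝ) ≤ u)]
  have hd₀ : 0 < d := by nlinarith
  have htu : t < u := by nlinarith
  have key : 0 ≤ (m - t) * (u - t) := by
    nlinarith [mul_nonneg hu₀.le (sub_nonneg.2 hK), mul_le_mul_of_nonneg_left hun hd₀.le]
  exact le_of_sub_nonneg (nonneg_of_mul_nonneg_left key (sub_pos.2 htu))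

lemma LocallyDense.le_card_goodCliques (hG : LocallyDense G ρ d) (hd₀ : 0 ≤ d) (hd : d < 2)
    (k : ℕ) (hk : ∀ j < k, d * Fintype.card V + 2 * ρ * Fintype.card V ^ 2 ≤
      ((d / 2) ^ (j + 1) * Fintype.card V) ^ 2) :
    (d / 2) ^ ((k + 1).choose 2) * (Fintype.card V : ℝ) ^ k / k.factorial ≤
      #(G.goodCliques (d / 2) k) := by
  induction k with
  | zero =>
    have h : (∅ : Finset V) ∈ G.goodCliques (d / 2) 0 := mem_goodCliques.2 (by simp)
    simpa using Nat.one_le_cast (α := ℝ) |>.2 (card_pos.2 ⟨∅, h⟩)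
  | succ k ih =>
    set n : ℝ := (Fintype.card V : ℝ)
    set t : ℝ := (d / 2) ^ (k + 1) * n
    have hstep := G.card_goodCliques_mul_le (d / 2) k fun K hK => by
      refine hG.le_card_goodExtensions hd ?_ (hk k k.lt_succ_self)
      calc 2 * t = d * ((d / 2) ^ k * n) := by ring
        _ ≤ d * #(G.commonNbhd K) := by gcongr; exact (mem_goodCliques.1 hK).2.2
    have ih := ih fun j hj => hk j (hj.trans k.lt_succ_self)
    calc (d / 2) ^ ((k + 1 + 1).choose 2) * n ^ (k + 1) / (k + 1).factorial
        = (d / 2) ^ ((k + 1).choose 2) * n ^ k / k.factorial * t / (k + 1) := by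
          rw [Nat.choose_succ_succ', Nat.choose_one_right, pow_add, Nat.factorial_succ]
          push_cast
          field_simp
          ring
      _ ≤ #(G.goodCliques (d / 2) k) * t / (k + 1) := by gcongr
      _ ≤ #(G.goodCliques (d / 2) (k + 1)) := by
          rw [div_le_iff₀ (by positivity)]
          exact hstep

end LocallyDense

open SimpleGraph

/-- for `0 < 1/n ≪ ρ ≪ d, 1/r` with `0 < d < 1`, every `(ρ,d)`-dense graph `G`
on `n` vertices contains at least `(d/2)^C(r+1,2) · nʳ / r!` copies of `K_r`, each of which is
`(dʳn/2ʳ)`-extendable. -/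
theorem stmt_3 :
    ∀ r : ℕ, 1 ≤ r → ∀ d : ℝ, 0 < d → d < 1 →
    ∃ ρ₀ : ℝ, 0 < ρ₀ ∧ ∀ ρ : ℝ, 0 < ρ → ρ ≤ ρ₀ →
    ∃ n₀ : ℕ, ∀ n : ℕ, n₀ ≤ n → ∀ G : SimpleGraph (Fin n),
      LocallyDense G ρ d →
      ∃ 𝒦 : Finset (Finset (Fin n)),
        (d / 2) ^ ((r + 1).choose 2) * (n : ℝ) ^ r / (r.factorial : ℝ) ≤ (𝒦.card : ℝ) ∧
        ∀ K ∈ 𝒦, K.card = r ∧ G.IsClique (K : Set (Fin n)) ∧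
          d ^ r * (n : ℝ) / 2 ^ r ≤ (commonNbhdCard G K : ℝ) := by
  intro r _ d hd₀ hd₁
  set ε : ℝ := (d / 2) ^ (2 * r)
  have hε : 0 < ε := by positivity
  refine ⟨ε / 4, by positivity, fun ρ _ hρ => ⟨⌈2 / ε⌉₊, fun n hn G hG => ?_⟩⟩
  classical
  have hεn : 2 ≤ ε * n := by
    rw [← div_le_iff₀' hε]
    exact (Nat.le_ceil _).trans (Nat.cast_le.2 hn)
  have hlevels : ∀ j < r, d * Fintype.card (Fin n) + 2 * ρ * Fintype.card (Fin n) ^ 2 ≤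
      ((d / 2) ^ (j + 1) * Fintype.card (Fin n)) ^ 2 := by
    intro j hj
    have : ε ≤ ((d / 2) ^ (j + 1)) ^ 2 := by
      rw [← pow_mul]
      exact pow_le_pow_of_le_one (by positivity) (by linarith) (by omega)
    rw [Fintype.card_fin]
    nlinarith [sq_nonneg (n : ℝ)]
  have hcount := hG.le_card_goodCliques hd₀.le (by linarith) r hlevels
  rw [Fintype.card_fin] at hcount
  refine ⟨G.goodCliques (d / 2) r, hcount, fun K hK => ?_⟩
  obtain ⟨hcard, hclique, hnbhd⟩ := mem_goodCliques.1 hK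
  refine ⟨hcard, hclique, ?_⟩
  rw [← card_commonNbhd]
  rw [Fintype.card_fin] at hnbhd
  calc d ^ r * (n : ℝ) / 2 ^ r = (d / 2) ^ r * n := by rw [div_pow]; ring
    _ ≤ _ := hnbhd
end

section
/- Let 0 < 1/n ≪ ρ ≪ d, η, 1/r < 1. Let G be an n-vertex graph and U ⊆ V(G) of size n' ≥ ηn/2 such that G[U] is (ρ,d)-dense and every vertex x ∈ V(G) satisfies |N(x) ∩ U| ≥ (1/2+η)n'. Let X, Y, W be pairwise disjoint subsets of V(G) with |X| = |Y| = ⌈4r/η⌉ and |W| ≤ ηn'/2. Then there exists Z ⊆ U such that (i) G[Z] is a complete graph K_r, (ii) Z is disjoint from X ∪ Y ∪ W, and (iii) there exist X' ⊆ X and Y' ⊆ Y with |X'| = |Y'| = r such that every vertex of X' ∪ Y' is adjacent in G to every vertex of Z. -/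
open Finset

/-- The number of neighbours of `x` in `G` lying in `A`, i.e. `|N_G(x) ∩ A|`. -/
noncomputable def nbhdCardIn {V : Type*} (G : SimpleGraph V) (A : Finset V) (x : V) : ℕ :=
  letI : DecidableRel G.Adj := Classical.decRel _
  (A.filter (fun y => G.Adj x y)).card

/-!
Deleting `X ∪ Y ∪ W` costs at most `3η|U|/4` vertices of `U`, so every vertex still has
`(1/2 + η/4)|U|` neighbours in `U₁ = U \ (X ∪ Y ∪ W)`. Double counting the edges between `X ∪ Y`
and `U₁` (a reverse Markov inequality) gives `η|U|/8` vertices of `U₁` with `(1 + η/4)m`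
neighbours in `X ∪ Y`, where `m = ⌈4r/η⌉`, hence at least `ηm/4 ≥ r` in each of `X` and `Y`.
Pigeonholing over the `C(m,r)²` pairs of `r`-subsets `X' ⊆ X`, `Y' ⊆ Y` yields a common
neighbourhood of `X' ∪ Y'` in `U₁` of linear size. Inside it a `K_r` is found greedily: by local
density a vertex of maximum degree in a set `A` of linear size has `d|A|/8` neighbours in `A`,
so `r` steps shrink the set by a factor `(d/8)^r` only.
-/

lemma Finset.sum_le_card_filter_mul_add {ι R : Type*} [Semiring R] [LinearOrder R]
    [IsOrderedRing R] (s : Finset ι) (f : ι → R) {M t : R} (hM : ∀ i ∈ s, f i ≤ M)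
    (ht : 0 ≤ t) : ∑ i ∈ s, f i ≤ #{i ∈ s | t ≤ f i} * M + #s * t := by
  rw [← sum_filter_add_sum_filter_not s (t ≤ f ·)]
  gcongr
  · simpa using sum_le_card_nsmul _ f M fun i hi => hM i (mem_filter.1 hi).1
  · calc ∑ i ∈ s with ¬t ≤ f i, f i ≤ #{i ∈ s | ¬t ≤ f i} * t := by
          simpa using sum_le_card_nsmul _ f t fun i hi => (not_le.1 (mem_filter.1 hi).2).le
      _ ≤ #s * t := by gcongr; exact filter_subset _ _

namespace SimpleGraph

variable {V : Type*} (G : SimpleGraph V)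

lemma nbhdCardIn_eq_card_filter [DecidableRel G.Adj] (A : Finset V) (x : V) :
    nbhdCardIn G A x = #{y ∈ A | G.Adj x y} := by
  unfold nbhdCardIn
  convert rfl

lemma nbhdCardIn_le_card (A : Finset V) (x : V) : nbhdCardIn G A x ≤ #A := by
  classical
  rw [nbhdCardIn_eq_card_filter]
  exact card_filter_le _ _

lemma nbhdCardIn_le_nbhdCardIn_sdiff_add_card [DecidableEq V] (A B : Finset V) (x : V) :
    nbhdCardIn G A x ≤ nbhdCardIn G (A \ B) x + #B := by
  classical
  simp only [nbhdCardIn_eq_card_filter]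
  calc #{y ∈ A | G.Adj x y} ≤ #({y ∈ A \ B | G.Adj x y} ∪ B) := by
        refine card_le_card fun y hy => ?_
        simp only [mem_filter, mem_union, mem_sdiff] at hy ⊢
        tauto
    _ ≤ _ := card_union_le _ _

lemma sum_nbhdCardIn_comm (S T : Finset V) :
    ∑ u ∈ S, nbhdCardIn G T u = ∑ x ∈ T, nbhdCardIn G S x := by
  classical
  simp only [nbhdCardIn_eq_card_filter, card_filter]
  rw [sum_comm]
  exact sum_congr rfl fun x _ => sum_congr rfl fun u _ => by rw [G.adj_comm]

lemma card_mul_le_sum_nbhdCardIn {U X : Finset V} {δ : ℝ}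
    (hdeg : ∀ x ∈ X, δ ≤ nbhdCardIn G U x) : #X * δ ≤ ∑ u ∈ U, (nbhdCardIn G X u : ℝ) := by
  rw [← nsmul_eq_mul]
  exact_mod_cast (card_nsmul_le_sum X _ δ hdeg).trans_eq
    (by exact_mod_cast (G.sum_nbhdCardIn_comm U X).symm)

lemma inducedEdgeCount_le_sum_nbhdCardIn [Fintype V] (A : Finset V) :
    inducedEdgeCount G A ≤ ∑ v ∈ A, nbhdCardIn G A v := by
  classical
  have hedges : inducedEdgeCount G A = #{e ∈ G.edgeFinset | ∀ v ∈ e, v ∈ A} := by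
    unfold inducedEdgeCount
    convert rfl
  calc inducedEdgeCount G A
      ≤ #({p ∈ A ×ˢ A | G.Adj p.1 p.2}.image fun p => s(p.1, p.2)) := by
        rw [hedges]
        apply card_le_card
        intro e he
        induction e with
        | h a b =>
          simp only [mem_filter, mem_edgeFinset, mem_edgeSet,
            Sym2.mem_iff, forall_eq_or_imp, forall_eq] at he
          exact mem_image.2 ⟨(a, b), by simp [he.1, he.2.1, he.2.2], rfl⟩
    _ ≤ #{p ∈ A ×ˢ A | G.Adj p.1 p.2} := card_image_le
    _ = ∑ v ∈ A, nbhdCardIn G A v := by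
        simp only [card_filter, sum_product, nbhdCardIn_eq_card_filter]

end SimpleGraph

section Density

variable {V : Type*} {G : SimpleGraph V} {ρ d : ℝ}

lemma LocallyDense.exists_le_nbhdCardIn [Fintype V] (hG : LocallyDense G ρ d) (hd : 0 ≤ d)
    {A : Finset V} (hA : 2 ≤ #A) (hρ : 8 * ρ * Fintype.card V ^ 2 ≤ d * #A ^ 2) :
    ∃ z ∈ A, d / 8 * #A ≤ nbhdCardIn G A z := by
  obtain ⟨z, hzA, hzmax⟩ := exists_max_image A (nbhdCardIn G A) (card_pos.1 (by omega))
  refine ⟨z, hzA, ?_⟩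
  have hedges : (inducedEdgeCount G A : ℝ) ≤ #A * nbhdCardIn G A z := by
    have := (G.inducedEdgeCount_le_sum_nbhdCardIn A).trans (sum_le_card_nsmul _ _ _ hzmax)
    exact_mod_cast this
  have hdense := hG A
  rw [Nat.cast_choose_two] at hdense
  have hA' : (2 : ℝ) ≤ #A := by exact_mod_cast hA
  -- `|A| · max deg ≥ e(G[A]) ≥ d|A|(|A| - 1)/2 - d|A|²/8 ≥ d|A|²/8` once `|A| ≥ 2`
  have hslack : 0 ≤ d * #A * (#A - 2) := mul_nonneg (mul_nonneg hd (by linarith)) (by linarith)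
  refine le_of_mul_le_mul_left ?_ (by linarith : (0 : ℝ) < #A)
  nlinarith

lemma LocallyDense.exists_isClique [Fintype V] (hG : LocallyDense G ρ d) (hd : 0 < d)
    (hd8 : d ≤ 8) {f : ℝ} (hf : 2 ≤ f) (hρ : 8 * ρ * Fintype.card V ^ 2 ≤ d * f ^ 2) :
    ∀ (k : ℕ) (A : Finset V), (8 / d) ^ k * f ≤ #A → ∃ Z ⊆ A, #Z = k ∧ G.IsClique (Z : Set V)
  | 0, _, _ => ⟨∅, empty_subset _, rfl, by simp⟩
  | k + 1, A, hA => by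
    classical
    have hfA : f ≤ #A :=
      have h8d : 1 ≤ 8 / d := (le_div_iff₀ hd).2 (by linarith)
      (le_mul_of_one_le_left (by linarith) (one_le_pow₀ h8d)).trans hA
    obtain ⟨z, hzA, hz⟩ := hG.exists_le_nbhdCardIn hd.le (A := A)
      (by exact_mod_cast hf.trans hfA) (hρ.trans (by gcongr))
    obtain ⟨Z, hZ, rfl, hZclique⟩ := hG.exists_isClique hd hd8 hf hρ k {w ∈ A | G.Adj z w} <| by
      rw [← G.nbhdCardIn_eq_card_filter]
      calc (8 / d) ^ k * f = d / 8 * ((8 / d) ^ (k + 1) * f) := by rw [pow_succ]; field_simp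
        _ ≤ d / 8 * #A := by gcongr
        _ ≤ _ := hz
    have hzZ : z ∉ Z := fun h => G.irrefl (mem_filter.1 (hZ h)).2
    refine ⟨insert z Z, insert_subset hzA (hZ.trans (filter_subset _ _)),
      card_insert_of_notMem hzZ, ?_⟩
    rw [coe_insert]
    exact hZclique.insert fun b hb _ => (mem_filter.1 (hZ hb)).2

lemma LocallyDense.exists_isClique_of_induce {U : Finset V}
    (hG : LocallyDense (G.induce (U : Set V)) ρ d) (hd : 0 < d) (hd8 : d ≤ 8) {f : ℝ}
    (hf : 2 ≤ f) (hρ : 8 * ρ * #U ^ 2 ≤ d * f ^ 2) {k : ℕ} {A : Finset V} (hAU : A ⊆ U)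
    (hA : (8 / d) ^ k * f ≤ #A) : ∃ Z ⊆ A, #Z = k ∧ G.IsClique (Z : Set V) := by
  classical
  have hcardU : Fintype.card (U : Set V) = #U := by simp
  have hcardA : #(A.subtype (· ∈ (U : Set V))) = #A := by
    rw [card_subtype, filter_true_of_mem fun a ha => mem_coe.2 (hAU ha)]
  obtain ⟨Z, hZA, hZ, hZclique⟩ :=
    hG.exists_isClique hd hd8 hf (by rwa [hcardU]) k _ (hcardA ▸ hA)
  refine ⟨Z.map (Function.Embedding.subtype _), ?_, by rwa [card_map], ?_⟩
  · intro v hv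
    obtain ⟨w, hw, rfl⟩ := mem_map.1 hv
    exact (mem_subtype.1 (hZA hw))
  · rw [coe_map, Function.Embedding.coe_subtype]
    exact SimpleGraph.isClique_induce_iff.1 hZclique

end Density

namespace SimpleGraph

variable {V : Type*} [DecidableEq V] (G : SimpleGraph V)

lemma le_card_filter_le_nbhdCardIn_and {U X Y : Finset V} {m r : ℕ} {ε N : ℝ}
    (hX : #X = m) (hY : #Y = m) (hm : 0 < m) (hr : r ≤ ε * m) (hUN : #U ≤ N)
    (hdeg : ∀ x ∈ X ∪ Y, (1 / 2 + ε) * N ≤ nbhdCardIn G U x) :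
    ε * N / 2 ≤ #{u ∈ U | r ≤ nbhdCardIn G X u ∧ r ≤ nbhdCardIn G Y u} := by
  have hm' : (0 : ℝ) < m := by exact_mod_cast hm
  have hε : 0 ≤ ε := nonneg_of_mul_nonneg_left ((Nat.cast_nonneg r).trans hr) hm'
  have hXle (u : V) : (nbhdCardIn G X u : ℝ) ≤ m := hX ▸ by exact_mod_cast nbhdCardIn_le_card ..
  have hYle (u : V) : (nbhdCardIn G Y u : ℝ) ≤ m := hY ▸ by exact_mod_cast nbhdCardIn_le_card ..
  have hlower : (1 + 2 * ε) * m * N ≤ ∑ u ∈ U, ((nbhdCardIn G X u : ℝ) + nbhdCardIn G Y u) := by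
    have hXsum := card_mul_le_sum_nbhdCardIn G fun x hx => hdeg x (mem_union_left Y hx)
    have hYsum := card_mul_le_sum_nbhdCardIn G fun y hy => hdeg y (mem_union_right X hy)
    rw [hX] at hXsum
    rw [hY] at hYsum
    rw [sum_add_distrib]
    linarith
  have hupper := sum_le_card_filter_mul_add U (fun u => (nbhdCardIn G X u : ℝ) + nbhdCardIn G Y u)
    (M := 2 * m) (t := (1 + ε) * m) (fun u _ => by linarith [hXle u, hYle u]) (by positivity)
  have hsub : {u ∈ U | (1 + ε) * m ≤ (nbhdCardIn G X u : ℝ) + nbhdCardIn G Y u}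
      ⊆ {u ∈ U | r ≤ nbhdCardIn G X u ∧ r ≤ nbhdCardIn G Y u} := by
    refine monotone_filter_right _ fun u _ hu => ⟨?_, ?_⟩
    · exact_mod_cast (by linarith [hYle u] : (r : ℝ) ≤ nbhdCardIn G X u)
    · exact_mod_cast (by linarith [hXle u] : (r : ℝ) ≤ nbhdCardIn G Y u)
  have hcard := (Nat.cast_le (α := ℝ)).2 (card_le_card hsub)
  have hUN' : (#U : ℝ) * ((1 + ε) * m) ≤ N * ((1 + ε) * m) := by gcongr
  -- `2m · #S ≥ (1 + 2ε)mN - (1 + ε)m|U| ≥ εmN`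
  nlinarith

lemma exists_card_le_choose_mul_card_commonNbhd [DecidableRel G.Adj] {S X Y : Finset V} {r : ℕ}
    (hS : S.Nonempty) (hdeg : ∀ u ∈ S, r ≤ nbhdCardIn G X u ∧ r ≤ nbhdCardIn G Y u) :
    ∃ X' ⊆ X, ∃ Y' ⊆ Y, #X' = r ∧ #Y' = r ∧
      #S ≤ (#X).choose r * (#Y).choose r * #{u ∈ S | ∀ a ∈ X' ∪ Y', G.Adj a u} := by
  set P := X.powersetCard r ×ˢ Y.powersetCard r
  let Joined (u : V) (p : Finset V × Finset V) : Prop := ∀ a ∈ p.1 ∪ p.2, G.Adj a u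
  have hcover (u : V) (hu : u ∈ S) : 1 ≤ #(P.bipartiteAbove Joined u) := by
    obtain ⟨hXu, hYu⟩ := hdeg u hu
    rw [nbhdCardIn_eq_card_filter] at hXu hYu
    obtain ⟨X', hX', rfl⟩ := exists_subset_card_eq hXu
    obtain ⟨Y', hY', hY'r⟩ := exists_subset_card_eq hYu
    refine card_pos.2 ⟨(X', Y'), mem_filter.2 ⟨?_, ?_⟩⟩
    · exact mem_product.2 ⟨mem_powersetCard.2 ⟨hX'.trans (filter_subset _ _), rfl⟩,
        mem_powersetCard.2 ⟨hY'.trans (filter_subset _ _), hY'r⟩⟩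
    · intro a ha
      rcases mem_union.1 ha with ha | ha
      · exact ((mem_filter.1 (hX' ha)).2).symm
      · exact ((mem_filter.1 (hY' ha)).2).symm
  have hsum : #S ≤ ∑ p ∈ P, #(S.bipartiteBelow Joined p) := by
    rw [← sum_card_bipartiteAbove_eq_sum_card_bipartiteBelow]
    simpa using card_nsmul_le_sum S _ 1 hcover
  have hP : P.Nonempty := by
    obtain ⟨u, hu⟩ := hS
    exact (card_pos.1 (hcover u hu)).mono (filter_subset _ _)
  obtain ⟨⟨X', Y'⟩, hp, hle⟩ := exists_le_of_sum_le hP (f := fun _ => #S)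
    (g := fun p => #P * #(S.bipartiteBelow Joined p)) (by
      rw [sum_const, ← mul_sum, smul_eq_mul]
      gcongr)
  obtain ⟨hX', hY'⟩ := mem_product.1 hp
  rw [mem_powersetCard] at hX' hY'
  refine ⟨X', hX'.1, Y', hY'.1, hX'.2, hY'.2, ?_⟩
  rwa [card_product, card_powersetCard, card_powersetCard] at hle

lemma exists_le_mul_card_commonNbhd_sdiff [DecidableRel G.Adj] {U X Y W : Finset V} {m r : ℕ}
    {η : ℝ} (hm : 0 < m) (hr : r ≤ η * m / 4) (hX : #X = m) (hY : #Y = m)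
    (hW : #W ≤ η * #U / 2) (hmU : 2 * m ≤ η * #U / 4)
    (hdeg : ∀ x ∈ X ∪ Y, (1 / 2 + η) * #U ≤ nbhdCardIn G U x) :
    ∃ X' ⊆ X, ∃ Y' ⊆ Y, #X' = r ∧ #Y' = r ∧
      η * #U ≤ 8 * m.choose r ^ 2 * #{u ∈ U \ (X ∪ Y ∪ W) | ∀ a ∈ X' ∪ Y', G.Adj a u} := by
  set U₁ := U \ (X ∪ Y ∪ W)
  have hremoved : (#(X ∪ Y ∪ W) : ℝ) ≤ 2 * m + η * #U / 2 := by
    have : #(X ∪ Y ∪ W) ≤ #X + #Y + #W :=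
      (card_union_le _ _).trans (Nat.add_le_add_right (card_union_le X Y) _)
    rw [hX, hY] at this
    exact (Nat.cast_le.2 this).trans (by push_cast; linarith)
  have hdeg₁ (x : V) (hx : x ∈ X ∪ Y) : (1 / 2 + η / 4) * #U ≤ nbhdCardIn G U₁ x := by
    have : (nbhdCardIn G U x : ℝ) ≤ nbhdCardIn G U₁ x + #(X ∪ Y ∪ W) := by
      exact_mod_cast G.nbhdCardIn_le_nbhdCardIn_sdiff_add_card U (X ∪ Y ∪ W) x
    linarith [hdeg x hx]
  set S := {u ∈ U₁ | r ≤ nbhdCardIn G X u ∧ r ≤ nbhdCardIn G Y u}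
  have hS : η / 4 * #U / 2 ≤ #S := G.le_card_filter_le_nbhdCardIn_and hX hY hm
    (by linarith) (by exact_mod_cast card_le_card sdiff_subset) fun x hx => by linarith [hdeg₁ x hx]
  have hSpos : 0 < #S := by
    have : (0 : ℝ) < m := by exact_mod_cast hm
    exact_mod_cast (by linarith : (0 : ℝ) < #S)
  obtain ⟨X', hX', Y', hY', hX'r, hY'r, hle⟩ :=
    G.exists_card_le_choose_mul_card_commonNbhd (card_pos.1 hSpos) fun u hu => (mem_filter.1 hu).2
  refine ⟨X', hX', Y', hY', hX'r, hY'r, ?_⟩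
  rw [hX, hY, ← sq] at hle
  have hmono : #{u ∈ S | ∀ a ∈ X' ∪ Y', G.Adj a u} ≤ #{u ∈ U₁ | ∀ a ∈ X' ∪ Y', G.Adj a u} :=
    card_le_card (filter_subset_filter _ (filter_subset _ _))
  calc η * #U ≤ 8 * #S := by linarith
    _ ≤ _ := by
      rw [mul_assoc]
      exact_mod_cast Nat.mul_le_mul_left 8 (hle.trans (Nat.mul_le_mul_left _ hmono))

theorem exists_isClique_joined_of_locallyDense {U X Y W : Finset V} {m r : ℕ} {d η ρ f : ℝ}
    (hd : 0 < d) (hd8 : d ≤ 8) (hm : 0 < m) (hr : r ≤ η * m / 4) (hX : #X = m) (hY : #Y = m)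
    (hW : #W ≤ η * #U / 2) (hmU : 2 * m ≤ η * #U / 4)
    (hdense : LocallyDense (G.induce (U : Set V)) ρ d)
    (hdeg : ∀ x ∈ X ∪ Y, (1 / 2 + η) * #U ≤ nbhdCardIn G U x) (hf : 2 ≤ f)
    (hρ : 8 * ρ * #U ^ 2 ≤ d * f ^ 2) (hfU : 8 * m.choose r ^ 2 * ((8 / d) ^ r * f) ≤ η * #U) :
    ∃ Z ⊆ U, #Z = r ∧ G.IsClique (Z : Set V) ∧ Disjoint Z (X ∪ Y ∪ W) ∧
      ∃ X' ⊆ X, ∃ Y' ⊆ Y, #X' = r ∧ #Y' = r ∧ ∀ a ∈ X' ∪ Y', ∀ z ∈ Z, G.Adj a z := by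
  classical
  obtain ⟨X', hX', Y', hY', hX'r, hY'r, hA⟩ :=
    G.exists_le_mul_card_commonNbhd_sdiff (W := W) hm hr hX hY hW hmU hdeg
  have hC : (0 : ℝ) < 8 * m.choose r ^ 2 := by
    have := Nat.choose_pos (hX ▸ hX'r ▸ card_le_card hX')
    positivity
  obtain ⟨Z, hZA, hZr, hZ⟩ := hdense.exists_isClique_of_induce hd hd8 hf hρ
    ((filter_subset _ _).trans sdiff_subset) (le_of_mul_le_mul_left (hfU.trans hA) hC)
  have hZA' (z : V) (hz : z ∈ Z) := mem_filter.1 (hZA hz)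
  refine ⟨Z, fun z hz => (mem_sdiff.1 (hZA' z hz).1).1, hZr, hZ,
    Finset.disjoint_left.2 fun _ hz => (mem_sdiff.1 (hZA' _ hz).1).2,
    X', hX', Y', hY', hX'r, hY'r, fun a ha z hz => (hZA' z hz).2 a ha⟩

end SimpleGraph

/-- the key connecting ingredient lemma for locally dense graphs. -/
theorem stmt_4 :
    ∀ r : ℕ, 1 ≤ r → ∀ d η : ℝ, 0 < d → d < 1 → 0 < η → η < 1 →
    ∃ ρ₀ : ℝ, 0 < ρ₀ ∧ ∀ ρ : ℝ, 0 < ρ → ρ ≤ ρ₀ →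
    ∃ n₀ : ℕ, ∀ n : ℕ, n₀ ≤ n → ∀ G : SimpleGraph (Fin n),
    ∀ U : Finset (Fin n),
      η * (n : ℝ) / 2 ≤ (U.card : ℝ) →
      LocallyDense (G.induce (U : Set (Fin n))) ρ d →
      (∀ x : Fin n, (1 / 2 + η) * (U.card : ℝ) ≤ (nbhdCardIn G U x : ℝ)) →
    ∀ X Y W : Finset (Fin n),
      Disjoint X Y → Disjoint X W → Disjoint Y W →
      X.card = ⌈(4 * r : ℝ) / η⌉₊ → Y.card = ⌈(4 * r : ℝ) / η⌉₊ →
      (W.card : ℝ) ≤ η * (U.card : ℝ) / 2 →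
    ∃ Z ⊆ U, Z.card = r ∧ G.IsClique (Z : Set (Fin n)) ∧
      Disjoint Z (X ∪ Y ∪ W) ∧
      ∃ X' ⊆ X, ∃ Y' ⊆ Y, X'.card = r ∧ Y'.card = r ∧
        ∀ a ∈ X' ∪ Y', ∀ z ∈ Z, G.Adj a z := by
  intro r hr d η hd hd1 hη hη1
  set m := ⌈(4 * r : ℝ) / η⌉₊
  have hrm : (r : ℝ) ≤ η * m / 4 := by
    have := Nat.le_ceil ((4 * r : ℝ) / η)
    rw [div_le_iff₀ hη] at this
    linarith
  have hm : 0 < m := Nat.ceil_pos.2 (by positivity)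
  have hC : 0 < m.choose r := by
    refine Nat.choose_pos (Nat.cast_le.1 (hrm.trans ?_) : r ≤ m)
    nlinarith [(Nat.cast_pos.2 hm : (0 : ℝ) < m)]
  -- the common neighbourhood has `η|U| / (8 C(m,r)²) = (8/d)^r · c|U|` vertices,
  -- enough for `r` greedy clique steps starting from `c|U|`
  set c : ℝ := η * (d / 8) ^ r / (8 * m.choose r ^ 2)
  have hc : 0 < c := by positivity
  refine ⟨d * c ^ 2 / 8, by positivity, fun ρ hρ hρ₀ => ⟨⌈2 / η * (8 * m / η + 2 / c)⌉₊,
    fun n hn G U hUn hdense hdeg X Y W _ _ _ hX hY hW => ?_⟩⟩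
  have hU : 8 * m / η + 2 / c ≤ #U := by
    have := (Nat.le_ceil _).trans (Nat.cast_le.2 hn : (_ : ℝ) ≤ n)
    rw [div_mul_eq_mul_div, div_le_iff₀ hη] at this
    linarith
  refine G.exists_isClique_joined_of_locallyDense (f := c * #U) hd (by linarith) hm hrm hX hY hW
    ?_ hdense (fun x _ => hdeg x) ?_ ?_ (le_of_eq ?_)
  · have := (le_add_of_nonneg_right (by positivity)).trans hU
    rw [div_le_iff₀ hη] at this
    linarith
  · have := (le_add_of_nonneg_left (by positivity)).trans hU
    rwa [div_le_iff₀ hc, mul_comm] at this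
  · calc 8 * ρ * #U ^ 2 ≤ 8 * (d * c ^ 2 / 8) * #U ^ 2 := by gcongr
      _ = d * (c * #U) ^ 2 := by ring
  · have hcC : 8 * (m.choose r : ℝ) ^ 2 * c = η * (d / 8) ^ r := by
      simp only [c]
      field_simp
    have hpow : (8 / d) ^ r * (d / 8) ^ r = 1 := by
      rw [← mul_pow, div_mul_div_comm, mul_comm 8 d, div_self (by positivity), one_pow]
    rw [mul_left_comm, ← mul_assoc _ c, ← mul_assoc, hcC]
    linear_combination η * #U * hpow
end

section
/- Let G[A,B] be an ε-regular bipartite graph with density d(A,B) ≥ δ, and let A', B' be disjoint vertex sets with |A △ A'| ≤ α|A'| and |B △ B'| ≤ α|B'| for some 0 ≤ α < 1. Then G[A',B'] is (ε + 6√α)-regular with density at least δ − 4α. -/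
open Finset

/-- The number of pairs `(a,b) ∈ A × B` with `a` adjacent to `b` in `G`. -/
noncomputable def pairEdgeCount {V : Type*} (G : SimpleGraph V) (A B : Finset V) : ℕ :=
  letI : DecidableEq V := Classical.decEq V
  letI : DecidableRel G.Adj := Classical.decRel _
  ((A ×ˢ B).filter (fun p => G.Adj p.1 p.2)).card

/-- The density `d(A,B) = e(A,B)/(|A||B|)` of the bipartite graph `G[A,B]`. -/
noncomputable def edgeDens {V : Type*} (G : SimpleGraph V) (A B : Finset V) : ℝ :=
  (pairEdgeCount G A B : ℝ) / ((A.card : ℝ) * (B.card : ℝ))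

/-- `G[A,B]` is `ε`-regular: all `X ⊆ A`, `Y ⊆ B` with `|X| ≥ ε|A|`, `|Y| ≥ ε|B|` satisfy
`|d(A,B) − d(X,Y)| ≤ ε`. -/
def IsRegularPair {V : Type*} (G : SimpleGraph V) (ε : ℝ) (A B : Finset V) : Prop :=
  ∀ X ⊆ A, ∀ Y ⊆ B, ε * (A.card : ℝ) ≤ (X.card : ℝ) → ε * (B.card : ℝ) ≤ (Y.card : ℝ) →
    |edgeDens G A B - edgeDens G X Y| ≤ ε

lemma pec_mono {V : Type*} (G : SimpleGraph V) {S S' T T' : Finset V} (hS : S ⊆ S') (hT : T ⊆ T') :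
    pairEdgeCount G S T ≤ pairEdgeCount G S' T' := by
  classical
  simp only [pairEdgeCount]
  apply card_le_card
  intro p hp
  simp only [mem_filter, mem_product] at *
  exact ⟨⟨hS hp.1.1, hT hp.1.2⟩, hp.2⟩

lemma pec_le_mul {V : Type*} (G : SimpleGraph V) (S T : Finset V) :
    pairEdgeCount G S T ≤ S.card * T.card := by
  classical
  simp only [pairEdgeCount]
  exact le_trans (card_filter_le _ _) (le_of_eq (card_product _ _))

lemma pec_empty_left {V : Type*} (G : SimpleGraph V) (T : Finset V) :
    pairEdgeCount G ∅ T = 0 := by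
  simpa using pec_le_mul G ∅ T

lemma pec_empty_right {V : Type*} (G : SimpleGraph V) (S : Finset V) :
    pairEdgeCount G S ∅ = 0 := by
  simpa using pec_le_mul G S ∅

lemma pec_cover {V : Type*} [DecidableEq V] (G : SimpleGraph V) (S T U W : Finset V) :
    pairEdgeCount G S T ≤ pairEdgeCount G (S ∩ U) (T ∩ W)
      + (S \ U).card * T.card + (S ∩ U).card * (T \ W).card := by
  classical
  simp only [pairEdgeCount]
  have hsub : ((S ×ˢ T).filter (fun p => G.Adj p.1 p.2)) ⊆
      (((S ∩ U) ×ˢ (T ∩ W)).filter (fun p => G.Adj p.1 p.2)) ∪ ((S \ U) ×ˢ T) ∪ ((S ∩ U) ×ˢ (T \ W)) := by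
    intro p hp
    simp only [mem_filter, mem_product] at hp
    by_cases h1 : p.1 ∈ U
    · by_cases h2 : p.2 ∈ W
      · simp only [mem_union, mem_filter, mem_product, mem_inter]
        exact Or.inl (Or.inl ⟨⟨⟨hp.1.1, h1⟩, hp.1.2, h2⟩, hp.2⟩)
      · simp only [mem_union, mem_product, mem_inter, mem_sdiff]
        exact Or.inr ⟨⟨hp.1.1, h1⟩, hp.1.2, h2⟩
    · simp only [mem_union, mem_product, mem_sdiff]
      exact Or.inl (Or.inr ⟨⟨hp.1.1, h1⟩, hp.1.2⟩)
  calc ((S ×ˢ T).filter (fun p => G.Adj p.1 p.2)).card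
      ≤ ((((S ∩ U) ×ˢ (T ∩ W)).filter (fun p => G.Adj p.1 p.2)) ∪ ((S \ U) ×ˢ T) ∪ ((S ∩ U) ×ˢ (T \ W))).card :=
        card_le_card hsub
    _ ≤ ((((S ∩ U) ×ˢ (T ∩ W)).filter (fun p => G.Adj p.1 p.2)) ∪ ((S \ U) ×ˢ T)).card + ((S ∩ U) ×ˢ (T \ W)).card :=
        card_union_le _ _
    _ ≤ (((S ∩ U) ×ˢ (T ∩ W)).filter (fun p => G.Adj p.1 p.2)).card + ((S \ U) ×ˢ T).card + ((S ∩ U) ×ˢ (T \ W)).card := by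
        exact Nat.add_le_add_right (card_union_le _ _) _
    _ = _ := by rw [card_product, card_product]

lemma edgeDens_nonneg {V : Type*} (G : SimpleGraph V) (S T : Finset V) : 0 ≤ edgeDens G S T := by
  apply div_nonneg <;> positivity

lemma edgeDens_le_one {V : Type*} (G : SimpleGraph V) (S T : Finset V) : edgeDens G S T ≤ 1 := by
  rcases Nat.eq_zero_or_pos S.card with h | h
  · simp [edgeDens, h]
  rcases Nat.eq_zero_or_pos T.card with h' | h'
  · simp [edgeDens, h']
  have hS : (0:ℝ) < S.card := by exact_mod_cast h
  have hT : (0:ℝ) < T.card := by exact_mod_cast h'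
  rw [edgeDens, div_le_one (by positivity)]
  exact_mod_cast pec_le_mul G S T

lemma edgeDens_empty_left {V : Type*} (G : SimpleGraph V) (T : Finset V) : edgeDens G ∅ T = 0 := by
  simp [edgeDens, pec_empty_left]

lemma edgeDens_empty_right {V : Type*} (G : SimpleGraph V) (S : Finset V) : edgeDens G S ∅ = 0 := by
  simp [edgeDens, pec_empty_right]

lemma key_density (d α a' b' x x' y y' : ℝ)
    (hd0 : 0 ≤ d) (hd1 : d ≤ 1) (hα : 0 ≤ α) (hα2 : α ≤ 2)
    (hx : 0 ≤ x) (hx' : 0 ≤ x') (hy : 0 ≤ y) (hy' : 0 ≤ y')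
    (hxa : x + x' ≤ α * a') (hyb : y + y' ≤ α * b')
    (hx'a : x' ≤ a') (hy'b : y' ≤ b') :
    (d - 4*α) * (a' * b') ≤ d * ((a' - x' + x) * (b' - y' + y)) - x * (b' - y' + y) - (a' - x') * y := by
  have ha' : 0 ≤ a' := le_trans hx' hx'a
  have hb' : 0 ≤ b' := le_trans hy' hy'b
  have hB : 0 ≤ b' - y' + y := by linarith
  nlinarith [mul_nonneg (mul_nonneg (sub_nonneg.2 hd1) ha') (by linarith : 0 ≤ α*b' - y),
    mul_nonneg (mul_nonneg hd0 ha') (by linarith : 0 ≤ α*b' - y'),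
    mul_nonneg (mul_nonneg (sub_nonneg.2 hd1) (by linarith : 0 ≤ α*a' - x)) hB,
    mul_nonneg (mul_nonneg hd0 (by linarith : 0 ≤ α*a' - x')) hB,
    mul_nonneg hx' hy,
    mul_nonneg (mul_nonneg (mul_nonneg hα ha') hb') (by linarith : (0:ℝ) ≤ 2 - α),
    mul_nonneg (mul_nonneg hα ha') (by linarith : 0 ≤ α*b' - y)]

lemma le_edgeDens_iff {V : Type*} (G : SimpleGraph V) {S T : Finset V}
    (h : 0 < (S.card : ℝ) * (T.card : ℝ)) (c : ℝ) :
    c ≤ edgeDens G S T ↔ c * ((S.card : ℝ) * (T.card : ℝ)) ≤ (pairEdgeCount G S T : ℝ) := by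
  rw [edgeDens, le_div_iff₀ h]

lemma edgeDens_le_iff {V : Type*} (G : SimpleGraph V) {S T : Finset V}
    (h : 0 < (S.card : ℝ) * (T.card : ℝ)) (c : ℝ) :
    edgeDens G S T ≤ c ↔ (pairEdgeCount G S T : ℝ) ≤ c * ((S.card : ℝ) * (T.card : ℝ)) := by
  rw [edgeDens, div_le_iff₀ h]

section arith
variable {d α s a' b' xc yc x0 y0 e e0 ac : ℝ}

lemma arith_gamma_le_one (hXc : (ε + 6*s)*a' ≤ xc) (hXa' : xc ≤ a') (ha' : 0 < a') :
    ε + 6*s ≤ 1 := by nlinarith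

lemma arith_alpha_le (hss : s*s = α) (hs6 : s ≤ 1/6) (hs : 0 ≤ s) : α ≤ s/6 := by nlinarith

lemma arith_x'X (hx' : x' ≤ α*a') (hss : s*s = α) (hε : 0 ≤ ε) (hs : 0 < s)
    (hXc : (ε + 6*s)*a' ≤ xc) (ha' : 0 ≤ a') : x' ≤ s/6 * xc := by
  nlinarith [mul_le_mul_of_nonneg_left hXc (by positivity : (0:ℝ) ≤ s/6),
    mul_nonneg (mul_nonneg hε hs.le) ha']

lemma arith_X0pos (h : xc - s/6 * xc ≤ x0) (hs6 : s ≤ 1/6) (hxc : 0 < xc) : 0 < x0 := by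
  nlinarith

lemma arith_eps_card (hac : ac ≤ (1+α)*a') (hx0 : xc - α*a' ≤ x0) (hxc : (ε+6*s)*a' ≤ xc)
    (hαs : α ≤ s/6) (hss : s*s = α) (hε1 : ε ≤ 1) (hε0 : 0 ≤ ε) (hs : 0 < s) (ha' : 0 < a') :
    ε * ac ≤ x0 := by
  have hα : (0:ℝ) ≤ α := hss ▸ mul_nonneg hs.le hs.le
  have h1 : ε * ac ≤ ε * ((1+α)*a') := mul_le_mul_of_nonneg_left hac hε0
  have h2 : (ε*α + α) * a' ≤ (6*s) * a' := by
    apply mul_le_mul_of_nonneg_right _ ha'.le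
    nlinarith [mul_nonneg (sub_nonneg.2 hε1) hα]
  nlinarith [h1, h2]

lemma arith_up (hd0 : 0 ≤ d) (hd1 : d ≤ 1) (hα : 0 ≤ α) (ha' : 0 < a') (hb' : 0 < b')
    (h : e ≤ d*((1+α)*a'*((1+α)*b')) + α*a'*b' + a'*(α*b')) :
    e ≤ (d + 4*α + α^2)*(a'*b') := by
  have h4 : d*(2*α+α^2) ≤ 2*α + α^2 := by nlinarith
  have h5 := mul_le_mul_of_nonneg_right h4 (mul_pos ha' hb').le
  nlinarith [h, h5]

lemma arith_dXY_up (hd0 : 0 ≤ d) (hs : 0 < s)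
    (hx0 : x0 ≤ xc) (hy0 : y0 ≤ yc) (hx0' : 0 ≤ x0) (hy0' : 0 ≤ y0)
    (hxc : 0 < xc) (hyc : 0 < yc)
    (h : e ≤ d*(x0*y0) + (s/6*xc)*yc + xc*(s/6*yc)) :
    e ≤ (d + s/3)*(xc*yc) := by
  nlinarith [mul_pos hxc hyc, mul_le_mul (mul_le_mul_of_nonneg_left hy0 hd0) hx0 hx0' (mul_nonneg hd0 (le_trans hy0' hy0))]

lemma arith_dXY_low (hd0 : 0 ≤ d) (hd1 : d ≤ 1) (hs : 0 < s) (hs6 : s ≤ 1/6)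
    (hx0 : xc - s/6*xc ≤ x0) (hy0 : yc - s/6*yc ≤ y0)
    (hxc : 0 < xc) (hyc : 0 < yc) (he0 : e0 = d*(x0*y0)) (he : e0 ≤ e) :
    (d - s/3)*(xc*yc) ≤ e := by
  have h1 : (0:ℝ) ≤ (1 - s/6)*xc := by nlinarith
  have h2 : (0:ℝ) ≤ (1 - s/6)*yc := by nlinarith
  have hprod : ((1 - s/6)*xc)*((1 - s/6)*yc) ≤ x0*y0 :=
    mul_le_mul (by linarith) (by linarith) h2 (by nlinarith)
  have h3 := mul_le_mul_of_nonneg_left hprod hd0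
  have h4 : d - s/3 ≤ d*(1-s/6)^2 := by
    nlinarith [mul_nonneg (sub_nonneg.2 hd1) hs.le, mul_nonneg hd0 (mul_nonneg hs.le hs.le)]
  have h5 := mul_le_mul_of_nonneg_right h4 (mul_pos hxc hyc).le
  nlinarith [h3, h5]

lemma arith_sq_le (h0 : 0 ≤ α) (h1 : α ≤ 1) : α^2 ≤ α := by nlinarith

end arith

set_option maxHeartbeats 2000000 in
/-- robustness of regular pairs under small vertex changes. -/
theorem stmt_12 {V : Type*} [DecidableEq V] (G : SimpleGraph V) (ε δ α : ℝ)
    (A B A' B' : Finset V) (hAB : Disjoint A B) (hA'B' : Disjoint A' B')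
    (hα0 : 0 ≤ α) (hα1 : α < 1)
    (hreg : IsRegularPair G ε A B) (hdens : δ ≤ edgeDens G A B)
    (hA : ((symmDiff A A').card : ℝ) ≤ α * (A'.card : ℝ))
    (hB : ((symmDiff B B').card : ℝ) ≤ α * (B'.card : ℝ)) :
    IsRegularPair G (ε + 6 * Real.sqrt α) A' B' ∧ δ - 4 * α ≤ edgeDens G A' B' := by
  classical
  have hsq0 : 0 ≤ Real.sqrt α := Real.sqrt_nonneg α
  have hε0 : 0 ≤ ε := by
    by_contra hc
    push_neg at hc
    have h1 : ε * (A.card:ℝ) ≤ (((∅:Finset V)).card : ℝ) := by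
      simp only [card_empty, Nat.cast_zero]
      exact mul_nonpos_of_nonpos_of_nonneg hc.le (Nat.cast_nonneg _)
    have h2 : ε * (B.card:ℝ) ≤ (((∅:Finset V)).card : ℝ) := by
      simp only [card_empty, Nat.cast_zero]
      exact mul_nonpos_of_nonpos_of_nonneg hc.le (Nat.cast_nonneg _)
    have h3 := hreg ∅ (empty_subset _) ∅ (empty_subset _) h1 h2
    rw [edgeDens_empty_left, sub_zero] at h3
    linarith [abs_nonneg (edgeDens G A B)]
  by_cases hA'e : A' = ∅
  · have hAe : A = ∅ := by
      have h0 : symmDiff A A' = A := by rw [hA'e, ← Finset.bot_eq_empty, symmDiff_bot]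
      rw [h0, hA'e] at hA
      simp only [card_empty, Nat.cast_zero, mul_zero] at hA
      have h1 : (A.card : ℝ) = 0 := le_antisymm hA (by positivity)
      have h2 : A.card = 0 := by exact_mod_cast h1
      exact card_eq_zero.mp h2
    constructor
    · intro X hX Y hY _ _
      have hXe : X = ∅ := subset_empty.mp (hA'e ▸ hX)
      rw [hXe, edgeDens_empty_left, hA'e, edgeDens_empty_left]
      simp only [sub_zero, abs_zero]
      linarith
    · rw [hA'e, edgeDens_empty_left]
      rw [hAe, edgeDens_empty_left] at hdens
      linarith
  by_cases hB'e : B' = ∅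
  · have hBe : B = ∅ := by
      have h0 : symmDiff B B' = B := by rw [hB'e, ← Finset.bot_eq_empty, symmDiff_bot]
      rw [h0, hB'e] at hB
      simp only [card_empty, Nat.cast_zero, mul_zero] at hB
      have h1 : (B.card : ℝ) = 0 := le_antisymm hB (by positivity)
      have h2 : B.card = 0 := by exact_mod_cast h1
      exact card_eq_zero.mp h2
    constructor
    · intro X hX Y hY _ _
      have hYe : Y = ∅ := subset_empty.mp (hB'e ▸ hY)
      rw [hYe, edgeDens_empty_right, hB'e, edgeDens_empty_right]
      simp only [sub_zero, abs_zero]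
      linarith
    · rw [hB'e, edgeDens_empty_right]
      rw [hBe, edgeDens_empty_right] at hdens
      linarith
  by_cases hαe : α = 0
  · have hAA' : A = A' := by
      have h1 : (symmDiff A A').card = 0 := by
        have : ((symmDiff A A').card : ℝ) ≤ 0 := by rw [hαe] at hA; linarith
        exact_mod_cast le_antisymm this (by positivity)
      exact symmDiff_eq_bot.mp (Finset.bot_eq_empty ▸ card_eq_zero.mp h1)
    have hBB' : B = B' := by
      have h1 : (symmDiff B B').card = 0 := by
        have : ((symmDiff B B').card : ℝ) ≤ 0 := by rw [hαe] at hB; linarith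
        exact_mod_cast le_antisymm this (by positivity)
      exact symmDiff_eq_bot.mp (Finset.bot_eq_empty ▸ card_eq_zero.mp h1)
    subst hαe
    constructor
    · rw [show ε + 6 * Real.sqrt 0 = ε by rw [Real.sqrt_zero]; ring, ← hAA', ← hBB']
      exact hreg
    · rw [← hAA', ← hBB']
      linarith
  have hαpos : 0 < α := lt_of_le_of_ne hα0 (Ne.symm hαe)
  have ha' : (0:ℝ) < A'.card := by
    exact_mod_cast card_pos.mpr (Finset.nonempty_of_ne_empty hA'e)
  have hb' : (0:ℝ) < B'.card := by
    exact_mod_cast card_pos.mpr (Finset.nonempty_of_ne_empty hB'e)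
  -- symmetric difference splits
  have hsymmA : ((A \ A').card : ℝ) + ((A' \ A).card : ℝ) ≤ α * A'.card := by
    have h : (symmDiff A A').card = (A \ A').card + (A' \ A).card := by
      rw [symmDiff_def, Finset.sup_eq_union, card_union_of_disjoint disjoint_sdiff_sdiff]
    rw [h] at hA
    push_cast at hA
    linarith
  have hsymmB : ((B \ B').card : ℝ) + ((B' \ B).card : ℝ) ≤ α * B'.card := by
    have h : (symmDiff B B').card = (B \ B').card + (B' \ B).card := by
      rw [symmDiff_def, Finset.sup_eq_union, card_union_of_disjoint disjoint_sdiff_sdiff]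
    rw [h] at hB
    push_cast at hB
    linarith
  have hx'a : ((A' \ A).card : ℝ) ≤ A'.card := by
    exact_mod_cast card_le_card (sdiff_subset : A' \ A ⊆ A')
  have hy'b : ((B' \ B).card : ℝ) ≤ B'.card := by
    exact_mod_cast card_le_card (sdiff_subset : B' \ B ⊆ B')
  have hacard : (A.card : ℝ) = (A'.card : ℝ) - (A' \ A).card + (A \ A').card := by
    have h1 : (A ∩ A').card + (A \ A').card = A.card := card_inter_add_card_sdiff A A'
    have h2 : (A' ∩ A).card + (A' \ A).card = A'.card := card_inter_add_card_sdiff A' A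
    have h3 : A ∩ A' = A' ∩ A := inter_comm _ _
    rw [h3] at h1
    have e1 : ((A' ∩ A).card : ℝ) + (A \ A').card = A.card := by exact_mod_cast h1
    have e2 : ((A' ∩ A).card : ℝ) + (A' \ A).card = A'.card := by exact_mod_cast h2
    linarith
  have hbcard : (B.card : ℝ) = (B'.card : ℝ) - (B' \ B).card + (B \ B').card := by
    have h1 : (B ∩ B').card + (B \ B').card = B.card := card_inter_add_card_sdiff B B'
    have h2 : (B' ∩ B).card + (B' \ B).card = B'.card := card_inter_add_card_sdiff B' B
    have h3 : B ∩ B' = B' ∩ B := inter_comm _ _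
    rw [h3] at h1
    have e1 : ((B' ∩ B).card : ℝ) + (B \ B').card = B.card := by exact_mod_cast h1
    have e2 : ((B' ∩ B).card : ℝ) + (B' \ B).card = B'.card := by exact_mod_cast h2
    linarith
  have hxpos : (0:ℝ) ≤ (A \ A').card := Nat.cast_nonneg _
  have hx'pos : (0:ℝ) ≤ (A' \ A).card := Nat.cast_nonneg _
  have hypos : (0:ℝ) ≤ (B \ B').card := Nat.cast_nonneg _
  have hy'pos : (0:ℝ) ≤ (B' \ B).card := Nat.cast_nonneg _
  have hapos : (0:ℝ) < A.card := by
    have h : (0:ℝ) < (1-α) * A'.card := mul_pos (by linarith) ha'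
    linarith [h]
  have hbpos : (0:ℝ) < B.card := by
    have h : (0:ℝ) < (1-α) * B'.card := mul_pos (by linarith) hb'
    linarith [h]
  have hd0 : 0 ≤ edgeDens G A B := edgeDens_nonneg G A B
  have hd1 : edgeDens G A B ≤ 1 := edgeDens_le_one G A B
  have heAB : (pairEdgeCount G A B : ℝ) = edgeDens G A B * (A.card * B.card) := by
    rw [edgeDens, div_mul_cancel₀]
    positivity
  -- sharp lower bound on edges of (A',B')
  have hkey := key_density (edgeDens G A B) α A'.card B'.card ((A \ A').card) ((A' \ A).card)
    ((B \ B').card) ((B' \ B).card) hd0 hd1 hα0 (by linarith) hxpos hx'pos hypos hy'pos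
    hsymmA hsymmB hx'a hy'b
  rw [← hacard, ← hbcard] at hkey
  have hccast : ((A' ∩ A).card : ℝ) = (A'.card : ℝ) - (A' \ A).card := by
    have h2 : (A' ∩ A).card + (A' \ A).card = A'.card := card_inter_add_card_sdiff A' A
    have e2 : ((A' ∩ A).card : ℝ) + (A' \ A).card = A'.card := by exact_mod_cast h2
    linarith
  have hEcover : (pairEdgeCount G A B : ℝ) ≤ (pairEdgeCount G (A ∩ A') (B ∩ B') : ℝ)
      + ((A \ A').card : ℝ) * B.card + ((A'.card : ℝ) - (A' \ A).card) * (B \ B').card := by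
    have hn := pec_cover G A B A' B'
    have hn' : (pairEdgeCount G A B : ℝ) ≤ (pairEdgeCount G (A ∩ A') (B ∩ B') : ℝ)
        + ((A \ A').card : ℝ) * B.card + ((A ∩ A').card : ℝ) * (B \ B').card := by
      exact_mod_cast hn
    rw [inter_comm A A'] at hn'
    rw [hccast] at hn'
    rw [inter_comm A' A] at hn'
    exact hn'
  have hmono : (pairEdgeCount G (A ∩ A') (B ∩ B') : ℝ) ≤ (pairEdgeCount G A' B' : ℝ) := by
    exact_mod_cast pec_mono G inter_subset_right inter_subset_right
  have hlowE : (edgeDens G A B - 4*α) * ((A'.card : ℝ) * B'.card) ≤ (pairEdgeCount G A' B' : ℝ) := by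
    linarith [hkey, hEcover, hmono, heAB]
  have hdenslow : edgeDens G A B - 4*α ≤ edgeDens G A' B' := by
    rw [le_edgeDens_iff G (by positivity)]
    exact hlowE
  -- upper bound on density of (A',B')
  have hcA : (A.card : ℝ) ≤ (1+α) * A'.card := by linarith
  have hcB : (B.card : ℝ) ≤ (1+α) * B'.card := by linarith
  have hup : edgeDens G A' B' ≤ edgeDens G A B + 4*α + α^2 := by
    rw [edgeDens_le_iff G (by positivity)]
    have hn := pec_cover G A' B' A B
    have hmono2 : pairEdgeCount G (A' ∩ A) (B' ∩ B) ≤ pairEdgeCount G A B :=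
      pec_mono G inter_subset_right inter_subset_right
    have hn' : (pairEdgeCount G A' B' : ℝ) ≤ (pairEdgeCount G A B : ℝ)
        + ((A' \ A).card : ℝ) * B'.card + ((A' ∩ A).card : ℝ) * (B' \ B).card := by
      exact_mod_cast le_trans hn (by omega)
    have hia : ((A' ∩ A).card : ℝ) ≤ A'.card := by
      exact_mod_cast card_le_card (inter_subset_left : A' ∩ A ⊆ A')
    have h1 : ((A' \ A).card : ℝ) * B'.card ≤ α * A'.card * B'.card :=
      mul_le_mul_of_nonneg_right (by linarith) hb'.le
    have h2 : ((A' ∩ A).card : ℝ) * (B' \ B).card ≤ A'.card * (α * B'.card) :=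
      mul_le_mul hia (by linarith) hy'pos ha'.le
    have h3 : edgeDens G A B * (A.card * B.card) ≤
        edgeDens G A B * ((1+α) * A'.card * ((1+α) * B'.card)) := by
      apply mul_le_mul_of_nonneg_left _ hd0
      exact mul_le_mul hcA hcB hbpos.le (mul_nonneg (by linarith) ha'.le)
    apply arith_up hd0 hd1 hα0 ha' hb'
    linarith [hn', h1, h2, h3, heAB]
  refine ⟨?_, by linarith⟩
  -- regularity
  intro X hX Y hY hXc hYc
  have hs : 0 < Real.sqrt α := Real.sqrt_pos.mpr hαpos
  set s := Real.sqrt α with hsdef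
  have hss : s * s = α := Real.mul_self_sqrt hα0
  have hXa' : (X.card : ℝ) ≤ A'.card := by exact_mod_cast card_le_card hX
  have hYb' : (Y.card : ℝ) ≤ B'.card := by exact_mod_cast card_le_card hY
  have hγ1 : ε + 6*s ≤ 1 := arith_gamma_le_one hXc hXa' ha'
  have hε1 : ε ≤ 1 := by linarith
  have hs6 : s ≤ 1/6 := by linarith
  have hαs : α ≤ s/6 := arith_alpha_le hss hs6 hs.le
  have hXpos : (0:ℝ) < X.card := lt_of_lt_of_le (mul_pos (by linarith) ha') hXc
  have hYpos : (0:ℝ) < Y.card := lt_of_lt_of_le (mul_pos (by linarith) hb') hYc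
  -- X ∩ A facts
  have hXsd : ((X \ A).card : ℝ) ≤ ((A' \ A).card : ℝ) := by
    exact_mod_cast card_le_card (sdiff_subset_sdiff hX Subset.rfl)
  have hX0eq : ((X ∩ A).card : ℝ) = (X.card : ℝ) - (X \ A).card := by
    have h := card_inter_add_card_sdiff X A
    have e : ((X ∩ A).card : ℝ) + (X \ A).card = X.card := by exact_mod_cast h
    linarith
  have hx'X : ((A' \ A).card : ℝ) ≤ s/6 * X.card :=
    arith_x'X (by linarith) hss hε0 hs hXc ha'.le
  have hX0ge : (X.card : ℝ) - s/6 * X.card ≤ (X ∩ A).card := by linarith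
  have hX0pos : (0:ℝ) < (X ∩ A).card := arith_X0pos hX0ge hs6 hXpos
  have hX0le : ((X ∩ A).card : ℝ) ≤ X.card := by
    exact_mod_cast card_le_card (inter_subset_left : X ∩ A ⊆ X)
  have hXAe : ε * A.card ≤ ((X ∩ A).card : ℝ) :=
    arith_eps_card hcA (by linarith) hXc hαs hss hε1 hε0 hs ha'
  -- Y ∩ B facts
  have hYsd : ((Y \ B).card : ℝ) ≤ ((B' \ B).card : ℝ) := by
    exact_mod_cast card_le_card (sdiff_subset_sdiff hY Subset.rfl)
  have hY0eq : ((Y ∩ B).card : ℝ) = (Y.card : ℝ) - (Y \ B).card := by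
    have h := card_inter_add_card_sdiff Y B
    have e : ((Y ∩ B).card : ℝ) + (Y \ B).card = Y.card := by exact_mod_cast h
    linarith
  have hy'Y : ((B' \ B).card : ℝ) ≤ s/6 * Y.card :=
    arith_x'X (by linarith) hss hε0 hs hYc hb'.le
  have hY0ge : (Y.card : ℝ) - s/6 * Y.card ≤ (Y ∩ B).card := by linarith
  have hY0pos : (0:ℝ) < (Y ∩ B).card := arith_X0pos hY0ge hs6 hYpos
  have hY0le : ((Y ∩ B).card : ℝ) ≤ Y.card := by
    exact_mod_cast card_le_card (inter_subset_left : Y ∩ B ⊆ Y)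
  have hYBe : ε * B.card ≤ ((Y ∩ B).card : ℝ) :=
    arith_eps_card hcB (by linarith) hYc hαs hss hε1 hε0 hs hb'
  have hrega := hreg (X ∩ A) inter_subset_right (Y ∩ B) inter_subset_right hXAe hYBe
  have hd00 : 0 ≤ edgeDens G (X ∩ A) (Y ∩ B) := edgeDens_nonneg G _ _
  have hd01 : edgeDens G (X ∩ A) (Y ∩ B) ≤ 1 := edgeDens_le_one G _ _
  have he0 : (pairEdgeCount G (X ∩ A) (Y ∩ B) : ℝ)
      = edgeDens G (X ∩ A) (Y ∩ B) * ((X ∩ A).card * (Y ∩ B).card) := by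
    rw [edgeDens, div_mul_cancel₀]
    positivity
  have hdXYup : edgeDens G X Y ≤ edgeDens G (X ∩ A) (Y ∩ B) + s/3 := by
    rw [edgeDens_le_iff G (by positivity)]
    have hn := pec_cover G X Y A B
    have hn' : (pairEdgeCount G X Y : ℝ) ≤ (pairEdgeCount G (X ∩ A) (Y ∩ B) : ℝ)
        + ((X \ A).card : ℝ) * Y.card + ((X ∩ A).card : ℝ) * (Y \ B).card := by
      exact_mod_cast hn
    have t1 : ((X \ A).card : ℝ) * Y.card ≤ (s/6 * X.card) * Y.card :=
      mul_le_mul_of_nonneg_right (le_trans hXsd hx'X) hYpos.le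
    have t2 : ((X ∩ A).card : ℝ) * (Y \ B).card ≤ X.card * (s/6 * Y.card) :=
      mul_le_mul hX0le (le_trans hYsd hy'Y) (Nat.cast_nonneg _) hXpos.le
    apply arith_dXY_up hd00 hs hX0le hY0le (Nat.cast_nonneg _) (Nat.cast_nonneg _) hXpos hYpos
    linarith [hn', t1, t2, he0]
  have hdXYlow : edgeDens G (X ∩ A) (Y ∩ B) - s/3 ≤ edgeDens G X Y := by
    rw [le_edgeDens_iff G (by positivity)]
    have hmonoXY : (pairEdgeCount G (X ∩ A) (Y ∩ B) : ℝ) ≤ (pairEdgeCount G X Y : ℝ) := by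
      exact_mod_cast pec_mono G inter_subset_left inter_subset_left
    exact arith_dXY_low hd00 hd01 hs hs6 hX0ge hY0ge hXpos hYpos he0 hmonoXY
  have habs := abs_le.mp hrega
  have hα2 : α^2 ≤ α := arith_sq_le hα0 hα1.le
  rw [abs_le]
  constructor
  · linarith [hdenslow, hdXYup, habs.2, hαs, hs.le]
  · linarith [hup, hdXYlow, habs.1, hαs, hα2]
end

section
/- Let G be an n-vertex (ρ,d)-dense graph with minimum degree δ(G) ≥ (1/2+η)n, and apply the degree form of the regularity lemma as above to obtain clusters V_1,…,V_L of size m, exceptional set V_0 with |V_0| ≤ εn, pure graph G', and reduced graph R on [L]. Set ρ* = max{3ρ, 3δ}. Then R is (ρ*, d)-dense: every X ⊆ [L] satisfies e(R[X]) ≥ d·C(|X|,2) − ρ*L². -/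
open Finset

/-!
Blow `X ⊆ [L]` up to `Y = ⋃_{i ∈ X} V_i`, a set of `m|X|` vertices. Density of `G` gives
`e(G[Y]) ≥ d·C(m|X|,2) − ρn²`; passing to `G'` costs at most `|Y|(δ+ε)n` edges; and every edge
of `G'[Y]` joins two clusters adjacent in `R`, each such pair carrying at most `m²` edges, so
`e(G'[Y]) ≤ m²·e(R[X])`. As `m²·C(|X|,2) ≤ C(m|X|,2)` and `(1−ε)n ≤ Lm`, dividing by `m²`
leaves an error of at most `(100/81)ρL² + (11/9)δL² ≤ ρ*L²`.
-/

open SimpleGraph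

section EdgeCounting

variable {V : Type*}

theorem card_interedges_univ_right [Fintype V] (G : SimpleGraph V) [DecidableRel G.Adj]
    (s : Finset V) : #(G.interedges s univ) = ∑ v ∈ s, G.degree v := by
  rw [interedges_def, card_filter, sum_product]
  refine sum_congr rfl fun v _ => ?_
  rw [← card_neighborFinset_eq_degree, neighborFinset_eq_filter, card_filter]

theorem two_mul_inducedEdgeCount [Fintype V] (G : SimpleGraph V) [DecidableRel G.Adj]
    (s : Finset V) : 2 * inducedEdgeCount G s = #(G.interedges s s) := by
  classical
  let H : SimpleGraph V := G ⊓ SimpleGraph.fromRel fun u v => u ∈ s ∧ v ∈ s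
  have hedges : inducedEdgeCount G s = #H.edgeFinset := by
    unfold inducedEdgeCount
    congr 1
    ext e
    induction e using Sym2.ind with
    | h u v => simpa [H] using fun h : G.Adj u v => by have := h.ne; tauto
  have hpairs : ({p | H.Adj p.1 p.2} : Finset (V × V)) = G.interedges s s := by
    ext ⟨u, v⟩
    simp only [H, mem_filter, mem_univ, true_and, inf_adj, fromRel_adj, interedges_def,
      mem_product]
    constructor
    · rintro ⟨hG, -, hs | hs⟩ <;> tauto
    · rintro ⟨hs, hG⟩
      exact ⟨hG, hG.ne, Or.inl hs⟩
  rw [hedges, ← hpairs]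
  convert H.two_mul_card_edgeFinset

theorem card_interedges_add_sum_degree_le [Fintype V] {G G' : SimpleGraph V}
    [DecidableRel G.Adj] [DecidableRel G'.Adj] (h : G' ≤ G) (s : Finset V) :
    #(G.interedges s s) + ∑ v ∈ s, G'.degree v ≤
      #(G'.interedges s s) + ∑ v ∈ s, G.degree v := by
  classical
  have hmono : ∀ t, G'.interedges s t ⊆ G.interedges s t := fun t p hp => by
    rw [mem_interedges_iff] at hp ⊢
    exact ⟨hp.1, hp.2.1, h hp.2.2⟩
  have hlost : G.interedges s s \ G'.interedges s s ⊆
      G.interedges s univ \ G'.interedges s univ := fun p hp => by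
    simp only [mem_sdiff, mem_interedges_iff, mem_univ, true_and] at hp ⊢
    exact ⟨⟨hp.1.1, hp.1.2.2⟩, fun h' => hp.2 ⟨hp.1.1, hp.1.2.1, h'.2⟩⟩
  have hlost_card := card_le_card hlost
  have hss := card_le_card (hmono s)
  have hsu := card_le_card (hmono univ)
  rw [card_sdiff_of_subset (hmono s), card_sdiff_of_subset (hmono univ)] at hlost_card
  rw [card_interedges_univ_right, card_interedges_univ_right] at hlost_card hsu
  omega

theorem two_mul_inducedEdgeCount_le_of_degree_le [Fintype V] {G G' : SimpleGraph V}
    [DecidableRel G.Adj] [DecidableRel G'.Adj] (h : G' ≤ G) {K : ℝ}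
    (hK : ∀ v, (G.degree v : ℝ) - K ≤ G'.degree v) (s : Finset V) :
    2 * (inducedEdgeCount G s : ℝ) ≤ 2 * inducedEdgeCount G' s + #s * K := by
  have hpairs : (#(G.interedges s s) : ℝ) + ∑ v ∈ s, (G'.degree v : ℝ)
      ≤ #(G'.interedges s s) + ∑ v ∈ s, (G.degree v : ℝ) := by
    exact_mod_cast card_interedges_add_sum_degree_le h s
  have hsum : ∑ v ∈ s, (G.degree v : ℝ) ≤ ∑ v ∈ s, (G'.degree v : ℝ) + #s * K := by
    rw [← nsmul_eq_mul, ← sum_const, ← sum_add_distrib]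
    exact sum_le_sum fun v _ => by linarith [hK v]
  have h2G := congrArg (Nat.cast : ℕ → ℝ) (two_mul_inducedEdgeCount G s)
  have h2G' := congrArg (Nat.cast : ℕ → ℝ) (two_mul_inducedEdgeCount G' s)
  push_cast at h2G h2G'
  linarith

theorem card_interedges_biUnion_le {ι : Type*} [DecidableEq V] (G : SimpleGraph V)
    (R : SimpleGraph ι) [DecidableRel G.Adj] [DecidableRel R.Adj] (f : ι → Finset V) {m : ℕ}
    (hf : ∀ i, #(f i) ≤ m) (hGR : ∀ i j, ∀ x ∈ f i, ∀ y ∈ f j, G.Adj x y → R.Adj i j)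
    (s : Finset ι) :
    #(G.interedges (s.biUnion f) (s.biUnion f)) ≤ m * m * #(R.interedges s s) := by
  have hblock : ∀ p : ι × ι,
      #(G.interedges (f p.1) (f p.2)) ≤ if R.Adj p.1 p.2 then m * m else 0 := by
    intro ⟨i, j⟩
    split_ifs with hij
    · exact (card_interedges_le_mul _ _ _).trans (Nat.mul_le_mul (hf i) (hf j))
    · refine (card_eq_zero.2 <| eq_empty_of_forall_notMem fun p hp => hij ?_).le
      rw [mem_interedges_iff] at hp
      exact hGR i j _ hp.1 _ hp.2.1 hp.2.2
  calc #(G.interedges (s.biUnion f) (s.biUnion f))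
      ≤ ∑ p ∈ s ×ˢ s, #(G.interedges (f p.1) (f p.2)) := by
        rw [interedges_biUnion]; exact card_biUnion_le
    _ ≤ ∑ p ∈ s ×ˢ s, if R.Adj p.1 p.2 then m * m else 0 := sum_le_sum fun p _ => hblock p
    _ = m * m * #(R.interedges s s) := by
        rw [← sum_filter, sum_const, smul_eq_mul, mul_comm, interedges_def]

end EdgeCounting

theorem Nat.mul_mul_choose_two_le (m x : ℕ) : m * m * x.choose 2 ≤ (m * x).choose 2 := by
  rw [← Nat.cast_le (α := ℝ)]
  push_cast [Nat.cast_choose_two]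
  rcases Nat.eq_zero_or_pos m with rfl | hm
  · simp
  · have : (1 : ℝ) ≤ m := by exact_mod_cast hm
    nlinarith [mul_nonneg (mul_nonneg (Nat.cast_nonneg m) (Nat.cast_nonneg x)) (sub_nonneg.2 this)]

theorem sq_add_mul_le_max_mul_sq {ρ δ ε n N k : ℝ} (hρ : 0 ≤ ρ) (hδ : 0 ≤ δ)
    (hεδ : ε ≤ δ / 10) (hε : ε ≤ 1 / 10) (hn0 : 0 ≤ n) (hn : n ≤ ε * n + N) (hk0 : 0 ≤ k)
    (hk : k ≤ N) :
    ρ * n ^ 2 + k * ((δ + ε) * n) ≤ max (3 * ρ) (3 * δ) * N ^ 2 := by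
  have hnN : n ≤ 10 / 9 * N := by nlinarith
  have hsq : ρ * n ^ 2 ≤ ρ * (100 / 81 * N ^ 2) := by gcongr; nlinarith
  have hlin : k * ((δ + ε) * n) ≤ N * (11 / 10 * δ * (10 / 9 * N)) :=
    calc k * ((δ + ε) * n) ≤ k * (11 / 10 * δ * n) := by gcongr; linarith
      _ ≤ N * (11 / 10 * δ * (10 / 9 * N)) := by have := hk0.trans hk; gcongr
  have h3ρ := le_max_left (3 * ρ) (3 * δ)
  have h3δ := le_max_right (3 * ρ) (3 * δ)
  nlinarith [sq_nonneg N]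

theorem stmt_18_general {V : Type*} [Fintype V] (G G' : SimpleGraph V)
    [DecidableRel G.Adj] [DecidableRel G'.Adj]
    (L : ℕ) (R : SimpleGraph (Fin L))
    (ρ d ε δ : ℝ) (hρ : 0 < ρ) (hd : 0 < d) (hε : 0 < ε) (hδ : 0 < δ)
    (hεδ : ε ≤ δ / 10) (hε1 : ε ≤ 1 / 10)
    (m : ℕ) (hm : 0 < m)
    (Vc : Fin L → Finset V) (V₀ : Finset V)
    (hV0 : (V₀.card : ℝ) ≤ ε * (Fintype.card V : ℝ))
    (hsize : ∀ i, (Vc i).card = m)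
    (hdisj : ∀ i j, i ≠ j → Disjoint (Vc i) (Vc j))
    (hcover : ∀ v : V, v ∈ V₀ ∨ ∃ i, v ∈ Vc i)
    (hdense : LocallyDense G ρ d)
    (hsub : G' ≤ G)
    (hdeg : ∀ v : V, (G.degree v : ℝ) - (δ + ε) * (Fintype.card V : ℝ) ≤ (G'.degree v : ℝ))
    (hempty : ∀ i, ∀ x ∈ Vc i, ∀ y ∈ Vc i, ¬ G'.Adj x y)
    (hpure : ∀ i j, i ≠ j → ¬ R.Adj i j → ∀ x ∈ Vc i, ∀ y ∈ Vc j, ¬ G'.Adj x y) :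
    LocallyDense R (max (3 * ρ) (3 * δ)) d := by
  classical
  intro X
  rw [Fintype.card_fin]
  set Y := X.biUnion Vc
  have hY : #Y = m * #X := by
    rw [card_biUnion fun i _ j _ hij => hdisj i j hij, sum_const_nat fun i _ => hsize i, mul_comm]
  have hYL : (#Y : ℝ) ≤ L * m := by
    rw [hY, mul_comm (L : ℝ)]
    exact_mod_cast Nat.mul_le_mul_left m (card_le_univ X |>.trans_eq (Fintype.card_fin L))
  have hn : (Fintype.card V : ℝ) ≤ ε * Fintype.card V + L * m := by
    have hcov : univ ⊆ V₀ ∪ univ.biUnion Vc := fun v _ => by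
      rcases hcover v with h | ⟨i, hi⟩
      exacts [mem_union_left _ h, mem_union_right _ (mem_biUnion.2 ⟨i, mem_univ i, hi⟩)]
    have := (card_le_card hcov).trans <|
      (card_union_le _ _).trans (Nat.add_le_add_left card_biUnion_le _)
    rw [card_univ, sum_const_nat fun i _ => hsize i, card_univ, Fintype.card_fin] at this
    have : (Fintype.card V : ℝ) ≤ #V₀ + L * m := by exact_mod_cast this
    linarith
  have hGR : ∀ i j, ∀ x ∈ Vc i, ∀ y ∈ Vc j, G'.Adj x y → R.Adj i j := by
    intro i j x hx y hy hxy
    by_cases hij : i = j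
    · subst hij; exact absurd hxy (hempty i x hx y hy)
    · by_contra hR; exact hpure i j hij hR x hx y hy hxy
  have hG'R : (inducedEdgeCount G' Y : ℝ) ≤ m * m * inducedEdgeCount R X := by
    have := card_interedges_biUnion_le G' R Vc (fun i => (hsize i).le) hGR X
    rw [← two_mul_inducedEdgeCount, ← two_mul_inducedEdgeCount] at this
    exact_mod_cast (by lia : inducedEdgeCount G' Y ≤ m * m * inducedEdgeCount R X)
  have hGY := hY ▸ hdense Y
  have hGG' := two_mul_inducedEdgeCount_le_of_degree_le hsub hdeg Y
  have hloss := sq_add_mul_le_max_mul_sq hρ.le hδ.le hεδ hε1 (Nat.cast_nonneg _) hn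
    (Nat.cast_nonneg #Y) hYL
  have hK : 0 ≤ (#Y : ℝ) * ((δ + ε) * Fintype.card V) := by positivity
  have hch : d * (m * m * (#X).choose 2 : ℝ) ≤ d * ((m * #X).choose 2 : ℕ) :=
    mul_le_mul_of_nonneg_left (by exact_mod_cast Nat.mul_mul_choose_two_le m #X) hd.le
  have key : (m : ℝ) ^ 2 * (d * (#X).choose 2 - max (3 * ρ) (3 * δ) * L ^ 2)
      ≤ (m : ℝ) ^ 2 * inducedEdgeCount R X := by
    linear_combination hch + hGY + hGG' / 2 + hG'R + hloss + hK / 2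
  exact le_of_mul_le_mul_left key (by positivity)

/-- the reduced graph of a locally dense graph is locally dense. With the
regularity-lemma setup (clusters `Vc i` of common size `m`, exceptional set `V₀` of size at
most `εn`, pure graph `G'` losing at most `(δ+ε)n` at each vertex, no `G'`-edges inside
clusters nor between clusters non-adjacent in `R`), if `G` is `(ρ,d)`-dense then `R` is
`(ρ*, d)`-dense where `ρ* = max{3ρ, 3δ}`:
every `X ⊆ [L]` satisfies `e(R[X]) ≥ d·C(|X|,2) − ρ*L²`. -/
theorem stmt_18 {V : Type*} [Fintype V] [DecidableEq V] (G G' : SimpleGraph V)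
    [DecidableRel G.Adj] [DecidableRel G'.Adj]
    (L : ℕ) (R : SimpleGraph (Fin L)) [DecidableRel R.Adj]
    (η ρ d ε δ : ℝ) (hρ : 0 < ρ) (hd : 0 < d) (hε : 0 < ε) (hδ : 0 < δ)
    (hεδ : ε ≤ δ / 10) (hε1 : ε ≤ 1 / 10)
    (m : ℕ) (hm : 0 < m)
    (Vc : Fin L → Finset V) (V₀ : Finset V)
    (hV0 : (V₀.card : ℝ) ≤ ε * (Fintype.card V : ℝ))
    (hsize : ∀ i, (Vc i).card = m)
    (hdisj : ∀ i j, i ≠ j → Disjoint (Vc i) (Vc j))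
    (hdisj0 : ∀ i, Disjoint V₀ (Vc i))
    (hcover : ∀ v : V, v ∈ V₀ ∨ ∃ i, v ∈ Vc i)
    (hdense : LocallyDense G ρ d)
    (hmin : ∀ v : V, (1 / 2 + η) * (Fintype.card V : ℝ) ≤ (G.degree v : ℝ))
    (hsub : G' ≤ G)
    (hdeg : ∀ v : V, (G.degree v : ℝ) - (δ + ε) * (Fintype.card V : ℝ) ≤ (G'.degree v : ℝ))
    (hempty : ∀ i, ∀ x ∈ Vc i, ∀ y ∈ Vc i, ¬ G'.Adj x y)
    (hpure : ∀ i j, i ≠ j → ¬ R.Adj i j → ∀ x ∈ Vc i, ∀ y ∈ Vc j, ¬ G'.Adj x y)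
    (hreg : ∀ i j, R.Adj i j →
      IsRegularPair G' ε (Vc i) (Vc j) ∧ δ ≤ edgeDens G' (Vc i) (Vc j)) :
    LocallyDense R (max (3 * ρ) (3 * δ)) d :=
  stmt_18_general G G' L R ρ d ε δ hρ hd hε hδ hεδ hε1 m hm Vc V₀ hV0 hsize hdisj hcover hdense hsub
    hdeg hempty hpure
end
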